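/- arXiv:1202.1790 — 6 statements merged into one kernel-verified Lean document; each statement's English description precedes it below -/
import Mathlib

section
/- For every natural number n, the quantity 4*(3n)!/(n!*(2n+2)!) is a positive integer, i.e. n!*(2n+2)! divides 4*(3n)!. -/
theorem tutte_formula_integral (n : ℕ) :
    (n.factorial * (2 * n + 2).factorial) ∣ 4 * (3 * n).factorial := by
  match n with
  | 0 => decide
  | 1 => decide
  | (m+2) =>
    set n := m + 2 with hn
    have e1 := Nat.choose_mul_factorial_mul_factorial (show n ≤ 3*n by omega)
    have e2 := Nat.choose_mul_factorial_mul_factorial (show m+1 ≤ 3*n by omega)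
    have e3 := Nat.choose_mul_factorial_mul_factorial (show m ≤ 3*n by omega)
    have h3 : 3*n - n = 2*m + 4 := by omega
    have h4 : 3*n - (m+1) = 2*m + 5 := by omega
    have h5 : 3*n - m = 2*m + 6 := by omega
    rw [h3] at e1
    rw [h4] at e2
    rw [h5] at e3
    set B1 := (3*n).choose n with hB1
    set B2 := (3*n).choose (m+1) with hB2
    set B3 := (3*n).choose m with hB3
    have key : 4 * (3*n).factorial + 5 * B2 * (n.factorial * (2*n+2).factorial)
        = (2 * B1 + 2 * B3) * (n.factorial * (2*n+2).factorial) := by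
      have fn : n.factorial = (m+2) * ((m+1) * m.factorial) := by
        rw [hn]; simp [Nat.factorial_succ]
      have f2 : (2*n+2).factorial = (2*m+6) * ((2*m+5) * (2*m+4).factorial) := by
        have h : 2*n+2 = (2*m+5) + 1 := by omega
        rw [h, Nat.factorial_succ]
        have h' : 2*m+5 = (2*m+4) + 1 := by omega
        rw [h', Nat.factorial_succ]
      have fn1 : (m+1).factorial = (m+1) * m.factorial := by simp [Nat.factorial_succ]
      have f25 : (2*m+5).factorial = (2*m+5) * (2*m+4).factorial := by
        have h : 2*m+5 = (2*m+4)+1 := by omega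
        rw [h, Nat.factorial_succ]
      have f26 : (2*m+6).factorial = (2*m+6) * ((2*m+5) * (2*m+4).factorial) := by
        have h : 2*m+6 = (2*m+5)+1 := by omega
        rw [h, Nat.factorial_succ]
        have h' : 2*m+5 = (2*m+4)+1 := by omega
        rw [h', Nat.factorial_succ]
      rw [fn1, f25] at e2
      rw [fn] at e1
      rw [f26] at e3
      rw [fn, f2]
      zify at e1 e2 e3 ⊢
      linear_combination (5*((m:ℤ)+2)*(2*m+6))*e2 - (2*((m:ℤ)+6+m)*(2*m+5))*e1 - (2*((m:ℤ)+2)*(m+1))*e3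
    have hd1 : (n.factorial * (2*n+2).factorial) ∣ (2*B1+2*B3) * (n.factorial * (2*n+2).factorial) :=
      Dvd.intro_left _ rfl
    have hd2 : (n.factorial * (2*n+2).factorial) ∣ 5 * B2 * (n.factorial * (2*n+2).factorial) :=
      Dvd.intro_left _ rfl
    have heq : 4 * (3*n).factorial = (2*B1+2*B3) * (n.factorial * (2*n+2).factorial) - 5 * B2 * (n.factorial * (2*n+2).factorial) := by omega
    rw [heq]
    exact Nat.dvd_sub hd1 hd2
end

section
/- The formal power series B2(x) = (1 + 3x + 4x^2 - sqrt(1 - 2x - 7x^2))/(4 + 8x) satisfies the functional equation B2 = x + B2*(B2 - x) + (B2 - x)^2 + x*(B2 + (B2 - x))^2; equivalently, the unique power series B with B(0)=0 and constant-term conditions satisfying B = x + B(B-x) + (B-x)^2 + x(2B-x)^2 has (4+8x)B = 1 + 3x + 4x^2 - sqrt(1-2x-7x^2) as formal power series. -/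
open PowerSeries

/-- Once `S` is eliminated via `hB`, `S ^ 2 - (1 - 2x - 7x²)` is `-2 (4 + 8x)` times the
difference of the two sides of the functional equation. -/
theorem sq_mul_functional_equation {R : Type*} [CommRing R] (x S B : R)
    (hS : S ^ 2 = 1 - 2 * x - 7 * x ^ 2)
    (hB : (4 + 8 * x) * B = 1 + 3 * x + 4 * x ^ 2 - S) :
    (4 + 8 * x) ^ 2 * B =
      (4 + 8 * x) ^ 2 * (x + B * (B - x) + (B - x) * (B - x) + x * (B + (B - x)) ^ 2) := by
  have hS' : S = 1 + 3 * x + 4 * x ^ 2 - (4 + 8 * x) * B := by linear_combination hB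
  subst hS'
  linear_combination (-(2 + 4 * x)) * hS

theorem four_add_eight_mul_X_ne_zero {R : Type*} [Semiring R] [CharZero R] :
    (4 + 8 * X : PowerSeries R) ≠ 0 := fun h => by
  simpa [map_ofNat] using congrArg constantCoeff h

theorem B2_functional_equation_general (S B : PowerSeries ℚ)
    (hS : S ^ 2 = 1 - 2 * X - 7 * X ^ 2)
    (hB : (4 + 8 * X) * B = 1 + 3 * X + 4 * X ^ 2 - S) :
    B = X + B * (B - X) + (B - X) * (B - X) + X * (B + (B - X)) ^ 2 :=
  mul_left_cancel₀ (pow_ne_zero 2 four_add_eight_mul_X_ne_zero)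
    (sq_mul_functional_equation X S B hS hB)

theorem B2_functional_equation (S B : PowerSeries ℚ)
    (hS0 : PowerSeries.constantCoeff S = 1)
    (hS : S ^ 2 = 1 - 2 * X - 7 * X ^ 2)
    (hB : (4 + 8 * X) * B = 1 + 3 * X + 4 * X ^ 2 - S) :
    B = X + B * (B - X) + (B - X) * (B - X) + X * (B + (B - X)) ^ 2 :=
  B2_functional_equation_general S B hS hB
end

section
/- There exists a unique formal power series B over ℚ with zero constant term satisfying B = x + B(B - x) + (B - x)^2 + (B - x - x*B^2)(B - x) + x*(3B - 2x - x*B^2)^2, and its coefficients of x^0 through x^10 are 0, 1, 0, 1, 1, 5, 13, 48, 160, 578, 2078, i.e. [x^1]B=1, [x^2]B=0, [x^3]B=1, [x^4]B=1, [x^5]B=5, [x^6]B=13, [x^7]B=48, [x^8]B=160, [x^9]B=578, [x^10]B=2078. -/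
open PowerSeries

/-- The functional equation for the generating function `B₃` of β(1,0)-trees
in which every internal node has a sibling and all labels (except possibly the
root) are at most 3. -/
def B3eqn (B : PowerSeries ℚ) : Prop :=
  B = X + B * (B - X) + (B - X) ^ 2 + (B - X - X * B ^ 2) * (B - X)
      + X * (3 * B - 2 * X - X * B ^ 2) ^ 2

/-- The right-hand side of the functional equation. -/
noncomputable def Fm (B : PowerSeries ℚ) : PowerSeries ℚ :=
  X + B * (B - X) + (B - X) ^ 2 + (B - X - X * B ^ 2) * (B - X)
      + X * (3 * B - 2 * X - X * B ^ 2) ^ 2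

lemma B3eqn_iff (B : PowerSeries ℚ) : B3eqn B ↔ B = Fm B := Iff.rfl

/-- The "difference quotient" of `Fm`. -/
noncomputable def Qm (u v : PowerSeries ℚ) : PowerSeries ℚ :=
  (u + v - X) + (u + v - 2 * X) + (u - X - X * u ^ 2)
    + (1 - X * (u + v)) * (v - X)
    + X * ((3 * u - 2 * X - X * u ^ 2) + (3 * v - 2 * X - X * v ^ 2)) * (3 - X * (u + v))

lemma key (u v : PowerSeries ℚ) : Fm u - Fm v = (u - v) * Qm u v := by
  unfold Fm Qm; ring

lemma constQ {u v : PowerSeries ℚ} (hu : constantCoeff u = 0)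
    (hv : constantCoeff v = 0) : constantCoeff (Qm u v) = 0 := by
  simp [Qm, map_add, map_sub, map_mul, map_pow, hu, hv, constantCoeff_X]

lemma constF {u : PowerSeries ℚ} (hu : constantCoeff u = 0) :
    constantCoeff (Fm u) = 0 := by
  simp [Fm, map_add, map_sub, map_mul, map_pow, hu, constantCoeff_X]

lemma keyCoeff {u v : PowerSeries ℚ} (hu : constantCoeff u = 0)
    (hv : constantCoeff v = 0) {n : ℕ}
    (h : ∀ i < n, coeff i u = coeff i v) :
    coeff n (Fm u) = coeff n (Fm v) := by
  have hk := congrArg (coeff n) (key u v)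
  rw [map_sub, coeff_mul] at hk
  have hz : ∀ p ∈ Finset.HasAntidiagonal.antidiagonal n,
      coeff p.1 (u - v) * coeff p.2 (Qm u v) = 0 := by
    rintro ⟨i, j⟩ hp
    rw [Finset.HasAntidiagonal.mem_antidiagonal] at hp
    rcases Nat.eq_zero_or_pos j with hj | hj
    · subst hj
      have : coeff 0 (Qm u v) = 0 := by
        rw [coeff_zero_eq_constantCoeff]; exact constQ hu hv
      simp [this]
    · have hi : i < n := by omega
      have : coeff i (u - v) = 0 := by
        rw [map_sub, h i hi, sub_self]
      simp [this]
  rw [Finset.sum_eq_zero hz, sub_eq_zero] at hk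
  exact hk

/-- Coefficients of the solution, defined by strong recursion. -/
noncomputable def bcoef : ℕ → ℚ
  | n => coeff n (Fm (mk fun i => if h : i < n then bcoef i else 0))
  termination_by n => n
  decreasing_by exact h

lemma bcoef_eq (n : ℕ) :
    bcoef n = coeff n (Fm (mk fun i => if _ : i < n then bcoef i else 0)) := by
  rw [bcoef]

lemma trunc_const (n : ℕ) (f : ℕ → ℚ) (hf : f 0 = 0) :
    constantCoeff (mk fun i => if _ : i < n then f i else 0) = 0 := by
  rw [← coeff_zero_eq_constantCoeff, coeff_mk]
  split <;> simp [hf]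

lemma bcoef_zero : bcoef 0 = 0 := by
  rw [bcoef_eq, coeff_zero_eq_constantCoeff]
  exact constF (by rw [← coeff_zero_eq_constantCoeff, coeff_mk]; simp)

/-- The solution power series. -/
noncomputable def Bsol : PowerSeries ℚ := mk bcoef

lemma Bsol_const : constantCoeff Bsol = 0 := by
  rw [Bsol, ← coeff_zero_eq_constantCoeff, coeff_mk]; exact bcoef_zero

lemma Bsol_eqn : Bsol = Fm Bsol := by
  ext n
  have h : ∀ i < n,
      coeff i (mk fun j => if _ : j < n then bcoef j else 0) = coeff i Bsol := by
    intro i hi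
    rw [coeff_mk, Bsol, coeff_mk, dif_pos hi]
  rw [Bsol, coeff_mk, bcoef_eq n]
  exact keyCoeff (trunc_const n bcoef bcoef_zero) Bsol_const h

/-- Explicit polynomial agreeing with the solution up to degree 10. -/
noncomputable def Pp : PowerSeries ℚ :=
  X + X ^ 3 + X ^ 4 + C 5 * X ^ 5 + C 13 * X ^ 6 + C 48 * X ^ 7
    + C 160 * X ^ 8 + C 578 * X ^ 9 + C 2078 * X ^ 10

noncomputable def Rr : PowerSeries ℚ :=
  C (7658) + C (20809) * X ^ 1 + C (32681) * X ^ 2 + C (90102) * X ^ 3 + C (255157) * X ^ 4 + C (717760) * X ^ 5 + C (1998028) * X ^ 6 + C (5329243) * X ^ 7 + C (13034474) * X ^ 8 + C (25489656) * X ^ 9 + C (14473590) * X ^ 10 + C (-60222790) * X ^ 11 + C (-115763427) * X ^ 12 + C (-161135608) * X ^ 13 + C (-422997238) * X ^ 14 + C (-1051461320) * X ^ 15 + C (-2654793307) * X ^ 16 + C (-6346764048) * X ^ 17 + C (-14276408288) * X ^ 18 + C (-28194907176) * X ^ 19 + C (-43366788480) * X ^ 20 + C (-29591028400) * X ^ 21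 + C (51413012160) * X ^ 22 + C (93557999392) * X ^ 23 + C (147923085944) * X ^ 24 + C (355390560000) * X ^ 25 + C (805235342560) * X ^ 26 + C (1859199042624) * X ^ 27 + C (4011990755952) * X ^ 28 + C (8119900570048) * X ^ 29 + C (14398322923616) * X ^ 30 + C (20745526412224) * X ^ 31 + C (18645849431056) * X ^ 32

set_option maxHeartbeats 4000000 in
lemma FP : Fm Pp = Pp + Rr * X ^ 11 := by
  unfold Fm Pp Rr
  simp only [map_neg, map_ofNat, map_one]
  ring

lemma Pp_const : constantCoeff Pp = 0 := by
  simp [Pp, map_add, map_mul, map_pow, constantCoeff_X]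

lemma coeff_low (B : PowerSeries ℚ) (hB : constantCoeff B = 0)
    (heq : B = Fm B) : ∀ n, n ≤ 10 → coeff n B = coeff n Pp := by
  intro n
  induction n using Nat.strong_induction_on with
  | _ n ih =>
    intro hn
    have h1 : coeff n B = coeff n (Fm B) := by rw [← heq]
    have h2 : coeff n (Fm B) = coeff n (Fm Pp) :=
      keyCoeff hB Pp_const (fun i hi => ih i hi (by omega))
    have h3 : coeff n (Rr * X ^ 11) = 0 := by
      rw [coeff_mul_X_pow']
      simp [Nat.not_le.mpr (by omega : n < 11)]
    rw [h1, h2, FP, map_add, h3, add_zero]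

theorem B3_exists_unique_and_coeffs :
    (∃! B : PowerSeries ℚ, PowerSeries.constantCoeff B = 0 ∧ B3eqn B) ∧
    ∀ B : PowerSeries ℚ, PowerSeries.constantCoeff B = 0 → B3eqn B →
      PowerSeries.coeff 1 B = 1 ∧ PowerSeries.coeff 2 B = 0 ∧
      PowerSeries.coeff 3 B = 1 ∧ PowerSeries.coeff 4 B = 1 ∧
      PowerSeries.coeff 5 B = 5 ∧ PowerSeries.coeff 6 B = 13 ∧
      PowerSeries.coeff 7 B = 48 ∧ PowerSeries.coeff 8 B = 160 ∧
      PowerSeries.coeff 9 B = 578 ∧ PowerSeries.coeff 10 B = 2078 := by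
  constructor
  · refine ⟨Bsol, ⟨Bsol_const, (B3eqn_iff Bsol).mpr Bsol_eqn⟩, ?_⟩
    rintro B ⟨hB0, hBe⟩
    rw [B3eqn_iff] at hBe
    ext n
    induction n using Nat.strong_induction_on with
    | _ n ih =>
      calc coeff n B = coeff n (Fm B) := by rw [← hBe]
        _ = coeff n (Fm Bsol) := keyCoeff hB0 Bsol_const ih
        _ = coeff n Bsol := by rw [← Bsol_eqn]
  · intro B hB0 hBe
    rw [B3eqn_iff] at hBe
    have h := coeff_low B hB0 hBe
    refine ⟨?_, ?_, ?_, ?_, ?_, ?_, ?_, ?_, ?_, ?_⟩ <;>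
      · rw [h _ (by norm_num)]
        simp [Pp, coeff_X, coeff_X_pow, coeff_C_mul]
end

section
/- A permutation π of {1,…,n} (n ≥ 1) is decomposable (there exists 1 < i ≤ n such that π_j < π_k for all j < i ≤ k) if and only if π contains an occurrence of the mesh pattern with underlying pattern 12 and shaded boxes {(0,1),(0,2),(1,1),(1,2),(2,0)}; equivalently, π is indecomposable if and only if it avoids this mesh pattern. -/
/-- `π` is decomposable: there is a cut point such that every value at a
position before it is smaller than every value at a position at or after it
(0-indexed version of `1 < i ≤ n`). -/
def Decomposable {n : ℕ} (π : Equiv.Perm (Fin n)) : Prop :=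
  ∃ i : ℕ, 1 ≤ i ∧ i < n ∧
    ∀ j k : Fin n, (j : ℕ) < i → i ≤ (k : ℕ) → π j < π k

/-- `π` contains the mesh pattern with underlying pattern `12` and shaded boxes
`{(0,1),(0,2),(1,1),(1,2),(2,0)}`: positions `i < j` with `π i < π j`, no
element strictly left of `i` with value greater than `π i`, no element strictly
between `i` and `j` with value greater than `π i`, and no element strictly
right of `j` with value less than `π i`. -/
def ContainsMesh12 {n : ℕ} (π : Equiv.Perm (Fin n)) : Prop :=
  ∃ i j : Fin n, i < j ∧ π i < π j ∧
    (∀ k : Fin n, k < i → ¬ π i < π k) ∧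
    (∀ k : Fin n, i < k → k < j → ¬ π i < π k) ∧
    (∀ k : Fin n, j < k → ¬ π k < π i)

lemma card_filter_lt' (n m : ℕ) : ((Finset.univ.filter (fun v : Fin n => (v:ℕ) < m)).card = min m n) := by
  rw [← Finset.card_map Fin.valEmbedding]
  have h : (Finset.univ.filter (fun v : Fin n => (v:ℕ) < m)).map Fin.valEmbedding = Finset.range (min m n) := by
    ext x
    simp only [Finset.mem_map, Finset.mem_filter, Finset.mem_univ, true_and,
      Fin.valEmbedding_apply, Finset.mem_range, Fin.exists_iff]
    constructor
    · rintro ⟨i, hi, him, rfl⟩; omega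
    · intro hx; exact ⟨x, by omega, by omega, rfl⟩
  rw [h, Finset.card_range]

lemma card_filter_le' (n m : ℕ) : ((Finset.univ.filter (fun v : Fin n => m ≤ (v:ℕ))).card = n - m) := by
  rw [← Finset.card_map Fin.valEmbedding]
  have h : (Finset.univ.filter (fun v : Fin n => m ≤ (v:ℕ))).map Fin.valEmbedding = Finset.Ico m n := by
    ext x
    simp only [Finset.mem_map, Finset.mem_filter, Finset.mem_univ, true_and,
      Fin.valEmbedding_apply, Finset.mem_Ico, Fin.exists_iff]
    constructor
    · rintro ⟨i, hi, him, rfl⟩; omega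
    · intro hx; exact ⟨x, by omega, by omega, rfl⟩
  rw [h, Nat.card_Ico]

theorem decomposable_iff_contains_mesh12 {n : ℕ} (hn : 1 ≤ n)
    (π : Equiv.Perm (Fin n)) :
    Decomposable π ↔ ContainsMesh12 π := by
  constructor
  · rintro ⟨c, hc1, hcn, H⟩
    -- F1 : positions ≥ c have values ≥ c
    have F1 : ∀ k : Fin n, c ≤ (k : ℕ) → c ≤ (π k : ℕ) := by
      intro k hk
      have hcard : ((Finset.univ.filter (fun v : Fin n => (v:ℕ) < c)).image π).card = c := by
        rw [Finset.card_image_of_injective _ π.injective, card_filter_lt']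
        omega
      have hsub : (Finset.univ.filter (fun v : Fin n => (v:ℕ) < c)).image π ⊆
          Finset.univ.filter (fun v : Fin n => (v:ℕ) < (π k : ℕ)) := by
        intro v hv
        simp only [Finset.mem_image, Finset.mem_filter, Finset.mem_univ, true_and] at hv ⊢
        obtain ⟨j, hj, rfl⟩ := hv
        exact H j k hj hk
      have := Finset.card_le_card hsub
      rw [hcard, card_filter_lt'] at this
      omega
    -- F2 : positions < c have values < c
    have F2 : ∀ j : Fin n, (j : ℕ) < c → (π j : ℕ) < c := by
      intro j hj
      have hcard : ((Finset.univ.filter (fun v : Fin n => c ≤ (v:ℕ))).image π).card = n - c := by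
        rw [Finset.card_image_of_injective _ π.injective, card_filter_le']
      have hsub : (Finset.univ.filter (fun v : Fin n => c ≤ (v:ℕ))).image π ⊆
          Finset.univ.filter (fun v : Fin n => (π j : ℕ) + 1 ≤ (v:ℕ)) := by
        intro v hv
        simp only [Finset.mem_image, Finset.mem_filter, Finset.mem_univ, true_and] at hv ⊢
        obtain ⟨k, hk, rfl⟩ := hv
        exact H j k hj hk
      have := Finset.card_le_card hsub
      rw [hcard, card_filter_le'] at this
      have hjn : (π j : ℕ) < n := (π j).isLt
      omega
    have hc1n : c - 1 < n := by omega
    set p : Fin n := π.symm ⟨c - 1, hc1n⟩ with hp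
    have hπp : π p = ⟨c - 1, hc1n⟩ := π.apply_symm_apply _
    have hpc : (p : ℕ) < c := by
      by_contra h
      have := F1 p (by omega)
      rw [hπp] at this
      simp at this
      omega
    refine ⟨p, ⟨c, hcn⟩, ?_, ?_, ?_, ?_, ?_⟩
    · exact hpc
    · have := F1 ⟨c, hcn⟩ (le_refl c)
      rw [hπp, Fin.lt_def]
      show c - 1 < (π ⟨c, hcn⟩ : ℕ)
      omega
    · intro k hk
      have := F2 k (lt_trans hk hpc)
      rw [hπp, not_lt, Fin.le_def]
      show (π k : ℕ) ≤ c - 1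
      omega
    · intro k _ hk2
      have := F2 k hk2
      rw [hπp, not_lt, Fin.le_def]
      show (π k : ℕ) ≤ c - 1
      omega
    · intro k hk
      have := F1 k (le_of_lt hk)
      rw [hπp, not_lt, Fin.le_def]
      show c - 1 ≤ (π k : ℕ)
      omega
  · rintro ⟨i, j, hij, hπ, h1, h2, h3⟩
    refine ⟨(j : ℕ), by omega, j.isLt, ?_⟩
    intro k l hk hl
    have hk_le : π k ≤ π i := by
      rcases lt_trichotomy k i with h | h | h
      · exact le_of_not_gt (h1 k h)
      · exact le_of_eq (by rw [h])
      · exact le_of_not_gt (h2 k h hk)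
    have hl_gt : π i < π l := by
      rcases eq_or_lt_of_le (Fin.le_def.mpr hl : j ≤ l) with h | h
      · rw [← h]; exact hπ
      · have hne : π l ≠ π i := fun he => by
          have : l = i := π.injective he
          have : (i : ℕ) < (l : ℕ) := lt_trans hij h
          omega
        exact lt_of_le_of_ne (le_of_not_gt (h3 l h)) (Ne.symm hne)
    exact lt_of_le_of_lt hk_le hl_gt
end

section
/- A permutation π of {1,…,n} contains the mesh pattern M' (underlying pattern 21 with shaded boxes {(0,2),(1,0),(1,1),(1,2),(2,1),(2,2)}) if and only if there exists i < n with π_i = n and π_k < π_{i+1} for all k > i+1. -/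
/-- `π` contains the mesh pattern `M' = (21, {(0,2),(1,0),(1,1),(1,2),(2,1),(2,2)})`:
positions `i < j` with `π j < π i`, no element before `i` with value greater
than `π i`, no element strictly between `i` and `j` at any height, and no
element after `j` with value greater than `π j`. -/
def ContainsM' {n : ℕ} (π : Equiv.Perm (Fin n)) : Prop :=
  ∃ i j : Fin n, i < j ∧ π j < π i ∧
    (∀ k : Fin n, k < i → ¬ π i < π k) ∧
    (∀ k : Fin n, ¬ (i < k ∧ k < j)) ∧
    (∀ k : Fin n, j < k → ¬ π j < π k)

theorem containsM'_iff {n : ℕ} (π : Equiv.Perm (Fin n)) :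
    ContainsM' π ↔
      ∃ i : Fin n, ∃ h : (i : ℕ) + 1 < n,
        (π i : ℕ) = n - 1 ∧
        ∀ k : Fin n, (i : ℕ) + 1 < (k : ℕ) → π k < π ⟨(i : ℕ) + 1, h⟩ := by
  constructor
  · rintro ⟨i, j, hij, hπ, h1, h2, h3⟩
    have hn : (0:ℕ) < n := i.pos
    -- j = i + 1
    have hj : (j : ℕ) = (i : ℕ) + 1 := by
      by_contra h
      have hlt : (i : ℕ) + 1 < (j : ℕ) := lt_of_le_of_ne hij (Ne.symm h)
      exact h2 ⟨(i:ℕ)+1, lt_trans hlt j.isLt⟩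
        ⟨by simp [Fin.lt_def], by simp [Fin.lt_def, hlt]⟩
    have hb : (i : ℕ) + 1 < n := hj ▸ j.isLt
    refine ⟨i, hb, ?_, ?_⟩
    · -- π i is the maximum
      have hmax : ∀ k : Fin n, k ≠ i → π k < π i := by
        intro k hk
        have hne : π k ≠ π i := fun h => hk (π.injective h)
        rcases lt_trichotomy k i with h | h | h
        · exact lt_of_le_of_ne (not_lt.mp (h1 k h)) hne
        · exact absurd h hk
        · have : j ≤ k := by
            by_contra hkj
            exact h2 k ⟨h, not_le.mp hkj⟩
          rcases eq_or_lt_of_le this with h' | h'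
          · exact h' ▸ hπ
          · exact lt_trans (lt_of_le_of_ne (not_lt.mp (h3 k h')) fun h'' =>
              (π.injective h'' ▸ h' : k < k).false) hπ
      -- the preimage of the top value equals i
      have := hmax (π.symm ⟨n-1, by omega⟩)
      by_contra hne
      have hki : π.symm ⟨n-1, by omega⟩ ≠ i := by
        intro h
        apply hne
        have := congrArg π h
        rw [Equiv.apply_symm_apply] at this
        simp [← this]
      have hlt := hmax _ hki
      rw [Equiv.apply_symm_apply] at hlt
      have := (π i).isLt
      simp [Fin.lt_def] at hlt
      omega
    · intro k hk
      have : (⟨(i:ℕ)+1, hb⟩ : Fin n) = j := by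
        apply Fin.ext; simp [hj]
      rw [this]
      have hjk : j < k := by simp [Fin.lt_def, hj]; omega
      have hne : π k ≠ π j := fun h => (π.injective h ▸ hjk : k < k).false
      exact lt_of_le_of_ne (not_lt.mp (h3 k hjk)) hne
  · rintro ⟨i, h, hmax, hright⟩
    set j : Fin n := ⟨(i:ℕ)+1, h⟩ with hjdef
    have hij : i < j := Fin.lt_def.mpr (Nat.lt_succ_self _)
    have hmax' : ∀ k : Fin n, k ≠ i → π k < π i := by
      intro k hk
      have hne : π k ≠ π i := fun h => hk (π.injective h)
      have h1 := (π k).isLt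
      have h2 : (π k : ℕ) ≠ (π i : ℕ) := fun h => hne (Fin.ext h)
      rw [Fin.lt_def]
      omega
    refine ⟨i, j, hij, hmax' j (Fin.ne_of_gt hij), ?_, ?_, ?_⟩
    · intro k hk
      exact not_lt.mpr (le_of_lt (hmax' k (Fin.ne_of_lt hk)))
    · rintro k ⟨hk1, hk2⟩
      rw [Fin.lt_def] at hk1 hk2
      simp only [hjdef] at hk2
      omega
    · intro k hk
      have : (i:ℕ)+1 < (k:ℕ) := hk
      exact not_lt.mpr (le_of_lt (hright k this))
end

section
/- Let F(x) = Σ_{k≥0} ((-2/3)^{k̄} * (-1/3)^{k̄} / (1/2)^{k̄}) * (27x/4)^k / k! be the formal power series over ℚ, where a^{k̄} = a(a+1)⋯(a+k-1) denotes the rising factorial. Then for all n ≥ 0, (2/3)*[x^{n+1}]F = 4*(3n)!/(n!*(2n+2)!), i.e. (2/3)*((-2/3)^{(n+1)-rising}*(-1/3)^{(n+1)-rising}/((1/2)^{(n+1)-rising}*(n+1)!))*(27/4)^{n+1} = 4*(3n)!/(n!*(2n+2)!). -/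
open Finset

/-- The rising factorial `a^{k̄} = a(a+1)⋯(a+k-1)` in `ℚ`. -/
def risingFac (a : ℚ) (k : ℕ) : ℚ := ∏ j ∈ Finset.range k, (a + j)

lemma risingFac_succ (a : ℚ) (k : ℕ) :
    risingFac a (k + 1) = risingFac a k * (a + k) := Finset.prod_range_succ _ _

lemma risingFac_half_pos (k : ℕ) : 0 < risingFac (1/2) k := by
  apply Finset.prod_pos
  intro j _
  positivity

lemma key_s17 (n : ℕ) :
    risingFac (-2/3) (n+1) * risingFac (-1/3) (n+1) * (27:ℚ)^(n+1) *
      ((n.factorial : ℚ) * ((2*n+2).factorial : ℚ)) * 2 =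
    4 * ((3*n).factorial : ℚ) * (risingFac (1/2) (n+1) * ((n+1).factorial : ℚ)) *
      3 * (4:ℚ)^(n+1) := by
  induction n with
  | zero => norm_num [risingFac]
  | succ n ih =>
    have r1 := risingFac_succ (-2/3) (n+1)
    have r2 := risingFac_succ (-1/3) (n+1)
    have r3 := risingFac_succ (1/2) (n+1)
    have e1 : ((3*(n+1)).factorial : ℚ)
        = (3*n+3) * ((3*n+2) * ((3*n+1) * ((3*n).factorial : ℚ))) := by
      have : 3*(n+1) = (3*n)+1+1+1 := by ring
      rw [this, Nat.factorial_succ, Nat.factorial_succ, Nat.factorial_succ]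
      push_cast; ring
    have e2 : ((2*(n+1)+2).factorial : ℚ)
        = (2*n+4) * ((2*n+3) * ((2*n+2).factorial : ℚ)) := by
      have : 2*(n+1)+2 = (2*n+2)+1+1 := by ring
      rw [this, Nat.factorial_succ, Nat.factorial_succ]
      push_cast; ring
    have e3 : ((n+1+1).factorial : ℚ) = (n+2) * ((n+1).factorial : ℚ) := by
      rw [Nat.factorial_succ]; push_cast; ring
    have e0 : (((n+1)).factorial : ℚ) = (n+1) * ((n).factorial : ℚ) := by
      rw [Nat.factorial_succ]; push_cast; ring
    rw [e0] at ih
    rw [r1, r2, r3, e1, e2, e3, e0]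
    push_cast
    linear_combination ((-2/3 + (n+1:ℚ)) * (-1/3 + (n+1:ℚ)) * 27 * ((n:ℚ)+1) *
      ((2*n+4 : ℚ)) * ((2*n+3 : ℚ))) * ih

/-- The coefficients of `A(x) = (2/(3x)) (₂F₁(-2/3,-1/3;1/2;27x/4) - 1)` are
given by Tutte's formula `4(3n)!/(n!(2n+2)!)`. -/
theorem hypergeom_coeff_eq_tutte (n : ℕ) :
    (2 / 3 : ℚ) *
      (risingFac (-2/3) (n + 1) * risingFac (-1/3) (n + 1) /
        (risingFac (1/2) (n + 1) * (n + 1).factorial)) * (27 / 4) ^ (n + 1) =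
    4 * (3 * n).factorial / (n.factorial * (2 * n + 2).factorial) := by
  have h2 : risingFac (1/2) (n+1) ≠ 0 := (risingFac_half_pos _).ne'
  have hf1 : ((n+1).factorial : ℚ) ≠ 0 := Nat.cast_ne_zero.mpr (Nat.factorial_ne_zero _)
  have hfn : ((n).factorial : ℚ) ≠ 0 := Nat.cast_ne_zero.mpr (Nat.factorial_ne_zero _)
  have hg1 : ((2*n+2).factorial : ℚ) ≠ 0 := Nat.cast_ne_zero.mpr (Nat.factorial_ne_zero _)
  have h4 : ((4:ℚ))^(n+1) ≠ 0 := by positivity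
  rw [div_pow]
  field_simp
  have k := key_s17 n
  simp only [neg_div] at k ⊢
  linear_combination k
end
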